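/- arXiv:1405.6584 — 3 statements merged into one kernel-verified Lean document; each statement's English description precedes it below -/
import Mathlib

section
/- Under the same setup, with ∫ f dP1 = 0 and γ < 1, the cross term satisfies |∫ f(x)g(z) dP(x,z)| ≤ γ‖f‖‖g‖, where ‖f‖² = ∫ f² dP1 (= ∫ f² dP since f depends on x alone) and ‖g‖² = ∫ g² dP2. -/
/-!
Let `ρ` be the Radon–Nikodym derivative of `P` with respect to `P1 ⊗ P2`. Since `f` is centred,
`∫ f g d(P1 ⊗ P2) = 0`, so `∫ f g dP = ∫ f g (ρ - 1) d(P1 ⊗ P2)`, and Cauchy–Schwarz in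
`L²(P1 ⊗ P2)` bounds this by `‖ρ - 1‖₂ ‖f‖ ‖g‖`. As `r` itself need not be measurable, `ρ` is only
compared with it: comparing set integrals squeezes `ρ` between `1 ± |r - 1|`, whence
`‖ρ - 1‖₂ ≤ γ`.
-/

open MeasureTheory
open scoped ENNReal

lemma abs_integral_mul_le_sqrt_mul_sqrt {α : Type*} [MeasurableSpace α] {μ : Measure α}
    {u v : α → ℝ} (hu : MemLp u 2 μ) (hv : MemLp v 2 μ) :
    |∫ x, u x * v x ∂μ| ≤ √(∫ x, u x ^ 2 ∂μ) * √(∫ x, v x ^ 2 ∂μ) := by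
  have holder := integral_mul_le_Lp_mul_Lq_of_nonneg Real.HolderConjugate.two_two
    (ae_of_all _ fun x => abs_nonneg (u x)) (ae_of_all _ fun x => abs_nonneg (v x))
    (by rw [ENNReal.ofReal_ofNat]; exact hu.abs) (by rw [ENNReal.ofReal_ofNat]; exact hv.abs)
  simp only [Real.rpow_two, sq_abs, ← Real.sqrt_eq_rpow] at holder
  calc |∫ x, u x * v x ∂μ| ≤ ∫ x, |u x * v x| ∂μ := abs_integral_le_integral_abs
    _ = ∫ x, |u x| * |v x| ∂μ := by simp only [abs_mul]
    _ ≤ _ := holder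

section withDensity

variable {α : Type*} [MeasurableSpace α] {μ : Measure α} [SigmaFinite μ] {f g : α → ℝ≥0∞}

lemma setLIntegral_rnDeriv_withDensity {s : Set α} (hs : MeasurableSet s) :
    ∫⁻ x in s, (μ.withDensity f).rnDeriv μ x ∂μ = ∫⁻ x in s, f x ∂μ := by
  rw [Measure.setLIntegral_rnDeriv' (withDensity_absolutelyContinuous _ _) hs,
    withDensity_apply _ hs]

lemma rnDeriv_withDensity_le_of_ae_le (hfg : f ≤ᵐ[μ] g) :
    (μ.withDensity f).rnDeriv μ ≤ᵐ[μ] g :=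
  ae_le_of_forall_setLIntegral_le_of_sigmaFinite₀
    (Measure.measurable_rnDeriv _ _).aemeasurable fun s hs _ => by
      rw [setLIntegral_rnDeriv_withDensity hs]
      exact lintegral_mono_ae (ae_restrict_of_ae hfg)

lemma le_rnDeriv_withDensity_of_ae_le (hg : AEMeasurable g μ) (hgf : g ≤ᵐ[μ] f) :
    g ≤ᵐ[μ] (μ.withDensity f).rnDeriv μ :=
  ae_le_of_forall_setLIntegral_le_of_sigmaFinite₀ hg fun s hs _ => by
    rw [setLIntegral_rnDeriv_withDensity hs]
    exact lintegral_mono_ae (ae_restrict_of_ae hgf)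

lemma abs_toReal_rnDeriv_withDensity_ofReal_sub_one_le {r : α → ℝ}
    (hr : AEMeasurable (fun x => |r x - 1|) μ) :
    ∀ᵐ x ∂μ, |((μ.withDensity fun x => ENNReal.ofReal (r x)).rnDeriv μ x).toReal - 1|
      ≤ |r x - 1| := by
  have upper := rnDeriv_withDensity_le_of_ae_le (μ := μ) (f := fun x => ENNReal.ofReal (r x))
    (g := fun x => ENNReal.ofReal (1 + |r x - 1|))
    (ae_of_all _ fun x => ENNReal.ofReal_le_ofReal (by linarith [le_abs_self (r x - 1)]))
  have lower := le_rnDeriv_withDensity_of_ae_le (μ := μ) (f := fun x => ENNReal.ofReal (r x))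
    (g := fun x => ENNReal.ofReal (1 - |r x - 1|)) (aemeasurable_const.sub hr).ennreal_ofReal
    (ae_of_all _ fun x => ENNReal.ofReal_le_ofReal (by linarith [neg_abs_le (r x - 1)]))
  filter_upwards [upper, lower] with x hup hlow
  have hup' := ENNReal.toReal_le_of_le_ofReal (by positivity) hup
  have hlow' :=
    (ENNReal.ofReal_le_iff_le_toReal (ne_top_of_le_ne_top ENNReal.ofReal_ne_top hup)).1 hlow
  rw [abs_sub_le_iff]
  constructor <;> linarith

end withDensity

section product

variable {α β : Type*} [MeasurableSpace α] [MeasurableSpace β] {P1 : Measure α} {P2 : Measure β}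
  {f : α → ℝ} {g : β → ℝ}

lemma MeasureTheory.MemLp.mul_prod_two (hf : MemLp f 2 P1) (hg : MemLp g 2 P2) :
    MemLp (fun p : α × β => f p.1 * g p.2) 2 (P1.prod P2) := by
  have hmeas : AEStronglyMeasurable (fun p : α × β => f p.1 * g p.2) (P1.prod P2) :=
    hf.1.comp_fst.mul hg.1.comp_snd
  refine (memLp_two_iff_integrable_sq hmeas).2 ?_
  simpa only [mul_pow] using hf.integrable_sq.mul_prod hg.integrable_sq

lemma integral_prod_mul_sq [SigmaFinite P1] [SigmaFinite P2] :
    ∫ p, (f p.1 * g p.2) ^ 2 ∂(P1.prod P2) = (∫ x, f x ^ 2 ∂P1) * ∫ z, g z ^ 2 ∂P2 := by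
  simp_rw [mul_pow]
  exact integral_prod_mul (fun x => f x ^ 2) (fun z => g z ^ 2)

lemma abs_integral_mul_le_of_absolutelyContinuous_prod [IsFiniteMeasure P1] [IsFiniteMeasure P2]
    {P : Measure (α × β)} [SigmaFinite P] (hP : P ≪ P1.prod P2)
    (hd : MemLp (fun p => (P.rnDeriv (P1.prod P2) p).toReal - 1) 2 (P1.prod P2))
    (hf : MemLp f 2 P1) (hg : MemLp g 2 P2) (hf0 : ∫ x, f x ∂P1 = 0) :
    |∫ p, f p.1 * g p.2 ∂P| ≤ √(∫ p, ((P.rnDeriv (P1.prod P2) p).toReal - 1) ^ 2 ∂(P1.prod P2))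
      * √(∫ x, f x ^ 2 ∂P1) * √(∫ z, g z ^ 2 ∂P2) := by
  set d := fun p => (P.rnDeriv (P1.prod P2) p).toReal - 1
  have hfg := hf.mul_prod_two hg
  have hfg_int : Integrable (fun p : α × β => f p.1 * g p.2) (P1.prod P2) :=
    (hf.integrable one_le_two).mul_prod (hg.integrable one_le_two)
  have hfgd_int : Integrable (fun p => f p.1 * g p.2 * d p) (P1.prod P2) := hfg.integrable_mul hd
  have hcross : ∫ p, f p.1 * g p.2 ∂P = ∫ p, f p.1 * g p.2 * d p ∂(P1.prod P2) :=
    calc ∫ p, f p.1 * g p.2 ∂P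
        = ∫ p, (P.rnDeriv (P1.prod P2) p).toReal * (f p.1 * g p.2) ∂(P1.prod P2) :=
          (integral_toReal_rnDeriv_mul hP).symm
      _ = ∫ p, f p.1 * g p.2 + f p.1 * g p.2 * d p ∂(P1.prod P2) := by
          congr 1 with p; ring
      _ = ∫ p, f p.1 * g p.2 * d p ∂(P1.prod P2) := by
          rw [integral_add hfg_int hfgd_int, integral_prod_mul, hf0, zero_mul, zero_add]
  calc |∫ p, f p.1 * g p.2 ∂P|
      ≤ √(∫ p, (f p.1 * g p.2) ^ 2 ∂(P1.prod P2)) * √(∫ p, d p ^ 2 ∂(P1.prod P2)) :=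
        hcross ▸ abs_integral_mul_le_sqrt_mul_sqrt hfg hd
    _ = _ := by
        rw [integral_prod_mul_sq, Real.sqrt_mul (integral_nonneg fun _ => sq_nonneg _)]
        ring

end product

theorem stmt1_general {α β : Type*} [MeasurableSpace α] [MeasurableSpace β]
    (P1 : Measure α) (P2 : Measure β)
    [IsProbabilityMeasure P1] [IsProbabilityMeasure P2]
    (r : α × β → ℝ)
    (P : Measure (α × β)) [IsProbabilityMeasure P]
    (hP : P = (P1.prod P2).withDensity (fun p => ENNReal.ofReal (r p)))
    (f : α → ℝ) (g : β → ℝ)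
    (hf2 : MemLp f 2 P1) (hg2 : MemLp g 2 P2)
    (hf0 : ∫ x, f x ∂P1 = 0)
    (γ : ℝ)
    (hγ : γ = Real.sqrt (∫ p, (r p - 1) ^ 2 ∂(P1.prod P2)))
    (hγint : Integrable (fun p => (r p - 1) ^ 2) (P1.prod P2)) :
    |∫ p, f p.1 * g p.2 ∂P| ≤
      γ * Real.sqrt (∫ x, (f x) ^ 2 ∂P1) * Real.sqrt (∫ z, (g z) ^ 2 ∂P2) := by
  set μ := P1.prod P2
  have hr : AEMeasurable (fun p => |r p - 1|) μ := by
    simpa only [Real.sqrt_sq_eq_abs] using hγint.1.aemeasurable.sqrt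
  have hdr : ∀ᵐ p ∂μ, |(P.rnDeriv μ p).toReal - 1| ≤ |r p - 1| :=
    hP ▸ abs_toReal_rnDeriv_withDensity_ofReal_sub_one_le hr
  set d := fun p => (P.rnDeriv μ p).toReal - 1
  have hd : MemLp d 2 μ := by
    have hr2 : MemLp (fun p => |r p - 1|) 2 μ :=
      (memLp_two_iff_integrable_sq hr.aestronglyMeasurable).2 (by simpa only [sq_abs] using hγint)
    refine hr2.mono
      ((Measure.measurable_rnDeriv _ μ).ennreal_toReal.sub_const 1).aestronglyMeasurable ?_
    filter_upwards [hdr] with p hp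
    simpa only [Real.norm_eq_abs, abs_abs] using hp
  have hdγ : √(∫ p, d p ^ 2 ∂μ) ≤ γ := by
    rw [hγ]
    refine Real.sqrt_le_sqrt (integral_mono_ae hd.integrable_sq hγint ?_)
    filter_upwards [hdr] with p hp
    exact sq_le_sq.2 hp
  calc |∫ p, f p.1 * g p.2 ∂P|
      ≤ √(∫ p, d p ^ 2 ∂μ) * √(∫ x, f x ^ 2 ∂P1) * √(∫ z, g z ^ 2 ∂P2) :=
        abs_integral_mul_le_of_absolutelyContinuous_prod
          (hP ▸ withDensity_absolutelyContinuous _ _) hd hf2 hg2 hf0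
    _ ≤ γ * √(∫ x, f x ^ 2 ∂P1) * √(∫ z, g z ^ 2 ∂P2) := by gcongr

theorem stmt1 {α β : Type*} [MeasurableSpace α] [MeasurableSpace β]
    (P1 : Measure α) (P2 : Measure β)
    [IsProbabilityMeasure P1] [IsProbabilityMeasure P2]
    (r : α × β → ℝ)
    (P : Measure (α × β)) [IsProbabilityMeasure P]
    (hP : P = (P1.prod P2).withDensity (fun p => ENNReal.ofReal (r p)))
    (f : α → ℝ) (g : β → ℝ)
    (hf2 : MemLp f 2 P1) (hg2 : MemLp g 2 P2)
    (hfg : Integrable (fun p : α × β => f p.1 * g p.2) P)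
    (hf0 : ∫ x, f x ∂P1 = 0)
    (γ : ℝ)
    (hγ : γ = Real.sqrt (∫ p, (r p - 1) ^ 2 ∂(P1.prod P2)))
    (hγint : Integrable (fun p => (r p - 1) ^ 2) (P1.prod P2))
    (hγ1 : γ < 1) :
    |∫ p, f p.1 * g p.2 ∂P| ≤
      γ * Real.sqrt (∫ x, (f x) ^ 2 ∂P1) * Real.sqrt (∫ z, (g z) ^ 2 ∂P2) :=
  stmt1_general P1 P2 r P hP f g hf2 hg2 hf0 γ hγ hγint
end

section
/- For nonnegative reals a, b and 1 ≤ q ≤ 2, one has (a+b)^q − a^q ≤ 2a^{q−1}b + 2b^q. -/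
/-!
Since `x ↦ x ^ q` is convex for `q ≥ 1`, the chord from `a` to `a + b` has slope at most the
derivative `q (a + b) ^ (q - 1)` at the right endpoint. The exponent `q - 1` lies in `[0, 1]`,
so `(a + b) ^ (q - 1) ≤ a ^ (q - 1) + b ^ (q - 1)`, and `q ≤ 2` finishes the estimate.
-/

open Real

namespace Real

theorem rpow_add_sub_rpow_le_mul {a b q : ℝ} (ha : 0 ≤ a) (hb : 0 ≤ b) (hq : 1 ≤ q) :
    (a + b) ^ q - a ^ q ≤ q * (a + b) ^ (q - 1) * b := by
  rcases hb.eq_or_lt with rfl | hb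
  · simp
  have hslope := (convexOn_rpow hq).slope_le_of_hasDerivAt (Set.mem_Ici.2 ha)
    (Set.mem_Ici.2 (by positivity)) (lt_add_of_pos_right a hb) (hasDerivAt_rpow_const (Or.inr hq))
  rwa [slope_def_field, add_sub_cancel_left, div_le_iff₀ hb] at hslope

end Real

theorem stmt2 (a b q : ℝ) (ha : 0 ≤ a) (hb : 0 ≤ b) (hq1 : 1 ≤ q) (hq2 : q ≤ 2) :
    (a + b) ^ q - a ^ q ≤ 2 * a ^ (q - 1) * b + 2 * b ^ q := by
  have hsub : (a + b) ^ (q - 1) ≤ a ^ (q - 1) + b ^ (q - 1) :=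
    rpow_add_le_add_rpow ha hb (by linarith) (by linarith)
  have hbq : b ^ (q - 1) * b = b ^ q := by
    rw [← rpow_add_one' hb (by linarith), sub_add_cancel]
  calc (a + b) ^ q - a ^ q ≤ q * (a + b) ^ (q - 1) * b := rpow_add_sub_rpow_le_mul ha hb hq1
    _ ≤ 2 * (a ^ (q - 1) + b ^ (q - 1)) * b := by gcongr
    _ = 2 * a ^ (q - 1) * b + 2 * b ^ q := by rw [← hbq]; ring
end

section
/- Let f be a square-integrable function of X, where (X,Z) has joint distribution P with density r with respect to the product of its marginals, and suppose ∫ f dP1 = 0. Define the projection f_P(z) := E(f(X) | Z = z) and the anti-projection f_A := f − f_P. Then ‖f_P‖ ≤ γ‖f‖, where γ² := ∫(r−1)² d(P1×P2). -/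
/-!
Since `∫ f dP1 = 0`, `f_P(z) = ∫ f(x) (r(x,z) - 1) dP1(x)`, so Cauchy–Schwarz in `x` gives
`f_P(z)² ≤ ‖f‖² ∫ (r(x,z) - 1)² dP1(x)` for almost every `z`; integrating in `z` (Fubini) yields
`‖f_P‖² ≤ ‖f‖² γ²`.
-/

open MeasureTheory

namespace MeasureTheory

variable {α : Type*} [MeasurableSpace α] {μ : Measure α}

theorem sq_integral_mul_le_integral_sq_mul_integral_sq {f g : α → ℝ}
    (hf : MemLp f 2 μ) (hg : MemLp g 2 μ) :
    (∫ x, f x * g x ∂μ) ^ 2 ≤ (∫ x, f x ^ 2 ∂μ) * ∫ x, g x ^ 2 ∂μ := by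
  have h2 : ENNReal.ofReal 2 = 2 := by norm_num
  have holder := integral_mul_norm_le_Lp_mul_Lq (μ := μ) Real.HolderConjugate.two_two
    (h2 ▸ hf) (h2 ▸ hg)
  simp only [Real.norm_eq_abs, Real.rpow_two, sq_abs, ← Real.sqrt_eq_rpow] at holder
  calc (∫ x, f x * g x ∂μ) ^ 2 = |∫ x, f x * g x ∂μ| ^ 2 := (sq_abs _).symm
    _ ≤ (√(∫ x, f x ^ 2 ∂μ) * √(∫ x, g x ^ 2 ∂μ)) ^ 2 := by
      gcongr
      refine abs_integral_le_integral_abs.trans ?_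
      simpa only [abs_mul] using holder
    _ = (∫ x, f x ^ 2 ∂μ) * ∫ x, g x ^ 2 ∂μ := by
      rw [mul_pow, Real.sq_sqrt (integral_nonneg fun _ => sq_nonneg _),
        Real.sq_sqrt (integral_nonneg fun _ => sq_nonneg _)]

/-- Cauchy–Schwarz when only `f * h`, not `h` itself, is known to be measurable: `h` is replaced
by `(f * h) / f`, which agrees with `h` where `f ≠ 0` and vanishes elsewhere. -/
theorem sq_integral_mul_le_of_aestronglyMeasurable_mul {f h : α → ℝ} (hf : MemLp f 2 μ)
    (hfh : AEStronglyMeasurable (fun x => f x * h x) μ)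
    (hh : Integrable (fun x => h x ^ 2) μ) :
    (∫ x, f x * h x ∂μ) ^ 2 ≤ (∫ x, f x ^ 2 ∂μ) * ∫ x, h x ^ 2 ∂μ := by
  set g : α → ℝ := fun x => f x * h x * (f x)⁻¹
  have hfg : ∀ x, f x * g x = f x * h x := fun x => by
    rcases eq_or_ne (f x) 0 with hx | hx
    · simp [hx]
    · simp only [g]; field_simp
  have hgh : ∀ x, g x ^ 2 ≤ h x ^ 2 := fun x => by
    rcases eq_or_ne (f x) 0 with hx | hx
    · simp [g, hx, sq_nonneg]
    · simp only [g]; field_simp; rfl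
  have hg_meas : AEStronglyMeasurable g μ :=
    (hfh.aemeasurable.mul hf.1.aemeasurable.inv).aestronglyMeasurable
  have hg_sq : Integrable (fun x => g x ^ 2) μ :=
    hh.mono' (hg_meas.pow 2) (.of_forall fun x => by
      rw [Real.norm_eq_abs, abs_of_nonneg (sq_nonneg _)]; exact hgh x)
  have hg : MemLp g 2 μ := (memLp_two_iff_integrable_sq hg_meas).2 hg_sq
  calc (∫ x, f x * h x ∂μ) ^ 2 = (∫ x, f x * g x ∂μ) ^ 2 := by simp only [hfg]
    _ ≤ (∫ x, f x ^ 2 ∂μ) * ∫ x, g x ^ 2 ∂μ := sq_integral_mul_le_integral_sq_mul_integral_sq hf hg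
    _ ≤ (∫ x, f x ^ 2 ∂μ) * ∫ x, h x ^ 2 ∂μ :=
      mul_le_mul_of_nonneg_left (integral_mono hg_sq hh hgh) (integral_nonneg fun _ => sq_nonneg _)

theorem sq_integral_mul_le_of_integral_eq_zero [IsFiniteMeasure μ] {f h : α → ℝ}
    (hf : MemLp f 2 μ) (hf0 : ∫ x, f x ∂μ = 0) (hh : Integrable (fun x => (h x - 1) ^ 2) μ) :
    (∫ x, f x * h x ∂μ) ^ 2 ≤ (∫ x, f x ^ 2 ∂μ) * ∫ x, (h x - 1) ^ 2 ∂μ := by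
  have hf_int : Integrable f μ := hf.integrable one_le_two
  have hf_sq_nonneg : 0 ≤ ∫ x, f x ^ 2 ∂μ := integral_nonneg fun _ => sq_nonneg _
  by_cases hfh : Integrable (fun x => f x * h x) μ
  · have hcentre : (fun x => f x * (h x - 1)) = fun x => f x * h x - f x := by
      funext x; ring
    have hmeas : AEStronglyMeasurable (fun x => f x * (h x - 1)) μ :=
      hcentre ▸ (hfh.sub hf_int).1
    have hint : ∫ x, f x * h x ∂μ = ∫ x, f x * (h x - 1) ∂μ := by
      rw [hcentre, integral_sub hfh hf_int, hf0, sub_zero]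
    rw [hint]
    exact sq_integral_mul_le_of_aestronglyMeasurable_mul hf hmeas hh
  · rw [integral_undef hfh]
    simpa using mul_nonneg hf_sq_nonneg (integral_nonneg fun _ => sq_nonneg _)

end MeasureTheory

theorem stmt3_general {α β : Type*} [MeasurableSpace α] [MeasurableSpace β]
    (P1 : Measure α) (P2 : Measure β)
    [IsProbabilityMeasure P1] [IsProbabilityMeasure P2]
    (r : α × β → ℝ)
    (f : α → ℝ)
    (hf2 : MemLp f 2 P1)
    (hf0 : ∫ x, f x ∂P1 = 0)
    (fP : β → ℝ)
    (hfP : ∀ z, fP z = ∫ x, f x * r (x, z) ∂P1)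
    (γ : ℝ)
    (hγ : γ = Real.sqrt (∫ p, (r p - 1) ^ 2 ∂(P1.prod P2)))
    (hγint : Integrable (fun p => (r p - 1) ^ 2) (P1.prod P2)) :
    Real.sqrt (∫ z, (fP z) ^ 2 ∂P2) ≤ γ * Real.sqrt (∫ x, (f x) ^ 2 ∂P1) := by
  set A : ℝ := ∫ x, f x ^ 2 ∂P1
  have hA : 0 ≤ A := integral_nonneg fun _ => sq_nonneg _
  have hpointwise : ∀ᵐ z ∂P2, fP z ^ 2 ≤ A * ∫ x, (r (x, z) - 1) ^ 2 ∂P1 := by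
    filter_upwards [hγint.prod_left_ae] with z hz
    rw [hfP z]
    exact sq_integral_mul_le_of_integral_eq_zero hf2 hf0 hz
  have hintegrated : ∫ z, fP z ^ 2 ∂P2 ≤ A * ∫ p, (r p - 1) ^ 2 ∂(P1.prod P2) := by
    rw [integral_prod_symm _ hγint, ← integral_const_mul]
    exact integral_mono_of_nonneg (.of_forall fun _ => sq_nonneg _)
      (hγint.integral_prod_right.const_mul A) hpointwise
  calc √(∫ z, fP z ^ 2 ∂P2) ≤ √(A * ∫ p, (r p - 1) ^ 2 ∂(P1.prod P2)) :=
        Real.sqrt_le_sqrt hintegrated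
    _ = γ * √A := by rw [Real.sqrt_mul hA, hγ, mul_comm]

theorem stmt3 {α β : Type*} [MeasurableSpace α] [MeasurableSpace β]
    (P1 : Measure α) (P2 : Measure β)
    [IsProbabilityMeasure P1] [IsProbabilityMeasure P2]
    (r : α × β → ℝ)
    (P : Measure (α × β)) [IsProbabilityMeasure P]
    (hP : P = (P1.prod P2).withDensity (fun p => ENNReal.ofReal (r p)))
    (f : α → ℝ)
    (hf2 : MemLp f 2 P1)
    (hf0 : ∫ x, f x ∂P1 = 0)
    (fP : β → ℝ)
    (hfP : ∀ z, fP z = ∫ x, f x * r (x, z) ∂P1)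
    (hfP2 : MemLp fP 2 P2)
    (γ : ℝ)
    (hγ : γ = Real.sqrt (∫ p, (r p - 1) ^ 2 ∂(P1.prod P2)))
    (hγint : Integrable (fun p => (r p - 1) ^ 2) (P1.prod P2)) :
    Real.sqrt (∫ z, (fP z) ^ 2 ∂P2) ≤ γ * Real.sqrt (∫ x, (f x) ^ 2 ∂P1) :=
  stmt3_general P1 P2 r f hf2 hf0 fP hfP γ hγ hγint
end
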